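/- Let q ∈ MvPolynomial (Fin n) (ZMod 2) be a quadratic form. Let e ∈ ℕ, let s be a finite set of natural numbers, and let f : ℕ → ℕ. Then q^e · (∏_{i ∈ s} (D_i q)^(f i)) · (q²·(D₁ q) + (D₀ q)³ + q³·(D₀ q)) = 0 if and only if there exist linear forms a and b with q = a·b. (This computes the kernel of the operation α·h₂, where h₂ = ι₂²·Q₁(ι₂) + Q₀(ι₂)³ + ι₂³·Q₀(ι₂) and α is any monomial in ι₂ and the Q_i(ι₂): the kernel is exactly the subfunctor of S² generated by the quadratic form uv, whose associated quotient is the unstable algebra H₂.) -/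

import Mathlib

open MvPolynomial

/-- The Milnor operation `Q_i` acting on `F₂[x₁,…,xₙ]` as the `F₂`-linear derivation
with `D_i (x_j) = x_j ^ (2^(i+1))`. -/
noncomputable def milnorQ (n i : ℕ) :
    Derivation (ZMod 2) (MvPolynomial (Fin n) (ZMod 2)) (MvPolynomial (Fin n) (ZMod 2)) :=
  MvPolynomial.mkDerivation (ZMod 2) fun j => X j ^ 2 ^ (i + 1)

/-!
In characteristic two every partial derivative `∂_j` commutes with every `Q_i`, and on a linear
form `Q_i` is the Frobenius power `ℓ ↦ ℓ ^ 2 ^ (i + 1)`. Hence `Q_i q = 0` forces all `∂_j q` to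
vanish, and a quadratic form over `F₂` with vanishing partials is the square of a linear form.

Differentiating `h₂(q) = 0` gives `u · E(u) = 0` for every `u = ∂_j q`, where
`E(t) = q²t³ + (Q₀(q)² + q³)t + q²Q₀(q)`. Unless `q` is a square, two distinct nonzero partials
`u ≠ v` are roots of `E`; as `E` has no `t²` term its third root is `u + v`, and Vieta's formulas
give `Q₀(q) = uv(u + v)` and `(q + uv)(q + u(u + v))(q + v(u + v)) = 0`.
-/

open Finsupp

section PDeriv

variable {σ R : Type*} [CommRing R]

theorem pderiv_derivation_comm (D : Derivation R (MvPolynomial σ R) (MvPolynomial σ R)) {j : σ}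
    (hD : ∀ k, pderiv j (D (X k)) = 0) (p : MvPolynomial σ R) :
    pderiv j (D p) = D (pderiv j p) := by
  have : ⁅pderiv j, D⁆ = 0 := derivation_ext fun k => by
    classical
    rw [Derivation.commutator_apply, hD, pderiv_X, Pi.single_apply]
    split_ifs <;> simp
  simpa [Derivation.commutator_apply, sub_eq_zero] using congr($this p)

theorem pderiv_comm (i j : σ) (p : MvPolynomial σ R) :
    pderiv j (pderiv i p) = pderiv i (pderiv j p) :=
  pderiv_derivation_comm _ (fun k => by classical simp [pderiv_X, Pi.single_apply, apply_ite]) p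

variable [CharP R 2]

theorem pderiv_pderiv_self (j : σ) (p : MvPolynomial σ R) : pderiv j (pderiv j p) = 0 := by
  induction p using MvPolynomial.induction_on with
  | C a => simp
  | add p r hp hr => simp [hp, hr]
  | mul_X p k hp =>
    classical
    rw [pderiv_mul, map_add, pderiv_mul, pderiv_mul, hp, pderiv_X, Pi.single_apply]
    split_ifs <;> simp [CharTwo.add_self_eq_zero]

theorem even_of_coeff_ne_zero_of_pderiv_eq_zero {p : MvPolynomial σ R}
    (hp : ∀ j, pderiv j p = 0) {d : σ →₀ ℕ} (hd : coeff d p ≠ 0) (j : σ) : Even (d j) := by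
  by_contra hodd
  have hj : single j 1 ≤ d := single_le_iff.mpr (Nat.one_le_iff_ne_zero.mpr (by grind))
  have h := coeff_pderiv (i := j) p (d - single j 1)
  rw [hp, tsub_add_cancel_of_le hj, coeff_zero] at h
  have : (((d - single j 1 : σ →₀ ℕ) j : ℕ) : R) = 0 := by
    rw [CharP.cast_eq_zero_iff R 2, ← even_iff_two_dvd, tsub_apply, single_eq_same]
    grind
  simp only [this, zero_add, mul_one] at h
  exact hd h.symm

end PDeriv

theorem exists_eq_single_two_of_even {σ : Type*} {d : σ →₀ ℕ} (hd : d.degree = 2)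
    (heven : ∀ j, Even (d j)) : ∃ j, d = single j 2 := by
  obtain ⟨j, hj⟩ : ∃ j, d j ≠ 0 := by
    by_contra! h
    simp [show d = 0 from Finsupp.ext h] at hd
  have hdj : d j = 2 := by
    have := hd ▸ le_degree j d
    obtain ⟨k, hk⟩ := heven j
    omega
  have hle : single j 2 ≤ d := single_le_iff.mpr hdj.ge
  have hrest : (d - single j 2).degree = 0 := by
    have := congr(degree $(add_tsub_cancel_of_le hle))
    rw [map_add, degree_single, hd] at this
    omega
  rw [degree_eq_zero_iff, tsub_eq_zero_iff_le] at hrest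
  exact ⟨j, le_antisymm hrest hle⟩

section Quadratic

variable {σ R : Type*} [Fintype σ] [CommRing R]

theorem eq_zero_of_isHomogeneous_one_of_pderiv_eq_zero {a : MvPolynomial σ R}
    (ha : a.IsHomogeneous 1) (h : ∀ j, pderiv j a = 0) : a = 0 := by
  simpa [h] using ha.sum_X_mul_pderiv.symm

theorem exists_pderiv_ne_of_pderiv_ne_zero [CharP R 2] {q : MvPolynomial σ R}
    (hq : q.IsHomogeneous 2) {j : σ} (hj : pderiv j q ≠ 0) :
    ∃ k, pderiv k q ≠ 0 ∧ pderiv k q ≠ pderiv j q := by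
  by_contra! h
  refine hj (eq_zero_of_isHomogeneous_one_of_pderiv_eq_zero hq.pderiv fun k => ?_)
  rw [pderiv_comm]
  by_cases hk : pderiv k q = 0
  · rw [hk, map_zero]
  · rw [h k hk, pderiv_pderiv_self]

theorem exists_sq_of_pderiv_eq_zero {q : MvPolynomial σ (ZMod 2)} (hq : q.IsHomogeneous 2)
    (hp : ∀ j, pderiv j q = 0) :
    ∃ l : MvPolynomial σ (ZMod 2), l.IsHomogeneous 1 ∧ q = l * l := by
  classical
  refine ⟨∑ j, C (coeff (single j 2) q) * X j,
    IsHomogeneous.sum _ _ _ fun j _ => isHomogeneous_C_mul_X _ _, ?_⟩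
  rw [← sq, sum_pow_char]
  ext d
  simp only [mul_pow, ← C_pow, ZMod.pow_card, coeff_sum, coeff_C_mul, coeff_X_pow]
  by_cases h : ∃ j, d = single j 2
  · obtain ⟨j, rfl⟩ := h
    simp [single_left_inj]
  · have hd : coeff d q = 0 := by
      by_contra hd
      refine h (exists_eq_single_two_of_even ?_ (even_of_coeff_ne_zero_of_pderiv_eq_zero hp hd))
      rw [degree_eq_weight_one]
      exact hq hd
    push Not at h
    simp [hd, fun j => (h j).symm]

end Quadratic

theorem eq_mul_or_of_cubic_eq_zero {R : Type*} [CommRing R] [IsDomain R] [CharP R 2]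
    {q A u v : R} (hq : q ≠ 0) (hu : u ≠ 0) (huv : u ≠ v)
    (hEu : q ^ 2 * u ^ 3 + A ^ 2 * u + q ^ 2 * A + q ^ 3 * u = 0)
    (hEv : q ^ 2 * v ^ 3 + A ^ 2 * v + q ^ 2 * A + q ^ 3 * v = 0) :
    q = u * v ∨ q = u * (u + v) ∨ q = v * (u + v) := by
  have hsum : u + v ≠ 0 := fun h => huv (by grind)
  have hA : A = u * v * (u + v) := by
    have : q ^ 2 * ((u + v) * (A + u * v * (u + v))) = 0 := by grind
    simpa [hq, hsum, CharTwo.add_eq_zero] using this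
  have : u * ((q + u * v) * (q + u * (u + v)) * (q + v * (u + v))) = 0 := by grind
  simpa [hu, CharTwo.add_eq_zero, or_assoc] using this

section Milnor

variable {n : ℕ}

theorem milnorQ_X (i : ℕ) (j : Fin n) : milnorQ n i (X j) = X j ^ 2 ^ (i + 1) :=
  mkDerivation_X _ _ _

theorem milnorQ_of_isHomogeneous_one {a : MvPolynomial (Fin n) (ZMod 2)}
    (ha : a.IsHomogeneous 1) (i : ℕ) : milnorQ n i a = a ^ 2 ^ (i + 1) := by
  rw [← mem_homogeneousSubmodule, homogeneousSubmodule_one_eq_span_X] at ha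
  induction ha using Submodule.span_induction with
  | mem x hx => obtain ⟨j, rfl⟩ := hx; exact milnorQ_X i j
  | zero => simp
  | add x y _ _ hx hy => rw [map_add, hx, hy, add_pow_char_pow]
  | smul r x _ hx => rw [Derivation.map_smul, hx, smul_pow, ZMod.pow_card_pow]

theorem pderiv_milnorQ (i : ℕ) (j : Fin n) (p : MvPolynomial (Fin n) (ZMod 2)) :
    pderiv j (milnorQ n i p) = milnorQ n i (pderiv j p) :=
  pderiv_derivation_comm _ (fun k => by simp [milnorQ_X, CharTwo.two_eq_zero]) p

theorem pderiv_eq_zero_of_milnorQ_eq_zero {q : MvPolynomial (Fin n) (ZMod 2)}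
    (hq : q.IsHomogeneous 2) {i : ℕ} (h : milnorQ n i q = 0) (j : Fin n) : pderiv j q = 0 := by
  refine eq_zero_of_pow_eq_zero (n := 2 ^ (i + 1)) ?_
  rw [← milnorQ_of_isHomogeneous_one hq.pderiv, ← pderiv_milnorQ, h, map_zero]

noncomputable def h2 (q : MvPolynomial (Fin n) (ZMod 2)) : MvPolynomial (Fin n) (ZMod 2) :=
  q ^ 2 * milnorQ n 1 q + milnorQ n 0 q ^ 3 + q ^ 3 * milnorQ n 0 q

theorem pderiv_h2 {q : MvPolynomial (Fin n) (ZMod 2)} (hq : q.IsHomogeneous 2) (j : Fin n) :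
    pderiv j (h2 q) = pderiv j q * (q ^ 2 * pderiv j q ^ 3 + milnorQ n 0 q ^ 2 * pderiv j q +
      q ^ 2 * milnorQ n 0 q + q ^ 3 * pderiv j q) := by
  have hu := milnorQ_of_isHomogeneous_one (hq.pderiv (i := j))
  simp only [h2, map_add, pderiv_mul, pderiv_pow, pderiv_milnorQ, hu]
  push_cast
  grind

theorem h2_mul_eq_zero {a b : MvPolynomial (Fin n) (ZMod 2)} (ha : a.IsHomogeneous 1)
    (hb : b.IsHomogeneous 1) : h2 (a * b) = 0 := by
  simp only [h2, Derivation.leibniz, milnorQ_of_isHomogeneous_one ha,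
    milnorQ_of_isHomogeneous_one hb, smul_eq_mul]
  grind

theorem exists_linear_factors_of_h2_eq_zero {q : MvPolynomial (Fin n) (ZMod 2)}
    (hq : q.IsHomogeneous 2) (hq0 : q ≠ 0) (h : h2 q = 0) :
    ∃ a b : MvPolynomial (Fin n) (ZMod 2), a.IsHomogeneous 1 ∧ b.IsHomogeneous 1 ∧ q = a * b := by
  by_cases hp : ∀ j, pderiv j q = 0
  · obtain ⟨l, hl, rfl⟩ := exists_sq_of_pderiv_eq_zero hq hp
    exact ⟨l, l, hl, hl, rfl⟩
  push Not at hp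
  obtain ⟨j, hu⟩ := hp
  obtain ⟨k, hv, hvu⟩ := exists_pderiv_ne_of_pderiv_ne_zero hq hu
  have hcubic (i : Fin n) (hi : pderiv i q ≠ 0) :
      q ^ 2 * pderiv i q ^ 3 + milnorQ n 0 q ^ 2 * pderiv i q + q ^ 2 * milnorQ n 0 q +
        q ^ 3 * pderiv i q = 0 := by
    have := pderiv_h2 hq i
    rw [h, map_zero, eq_comm, mul_eq_zero] at this
    exact this.resolve_left hi
  have hl (i : Fin n) : (pderiv i q).IsHomogeneous 1 := hq.pderiv
  rcases eq_mul_or_of_cubic_eq_zero hq0 hu (Ne.symm hvu) (hcubic j hu) (hcubic k hv)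
    with h | h | h
  · exact ⟨_, _, hl j, hl k, h⟩
  · exact ⟨_, _, hl j, (hl j).add (hl k), h⟩
  · exact ⟨_, _, hl k, (hl j).add (hl k), h⟩

end Milnor

theorem kernel_of_alpha_h2 {n : ℕ}
    (q : MvPolynomial (Fin n) (ZMod 2)) (hq : q.IsHomogeneous 2)
    (e : ℕ) (s : Finset ℕ) (f : ℕ → ℕ) :
    q ^ e * (∏ i ∈ s, (milnorQ n i q) ^ f i) *
        (q ^ 2 * milnorQ n 1 q + (milnorQ n 0 q) ^ 3 + q ^ 3 * milnorQ n 0 q) = 0 ↔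
      ∃ a b : MvPolynomial (Fin n) (ZMod 2), a.IsHomogeneous 1 ∧ b.IsHomogeneous 1 ∧
        q = a * b := by
  change q ^ e * (∏ i ∈ s, (milnorQ n i q) ^ f i) * h2 q = 0 ↔ _
  refine ⟨fun h => ?_, ?_⟩
  · by_cases hq0 : q = 0
    · exact ⟨0, 0, isHomogeneous_zero _ _ _, isHomogeneous_zero _ _ _, by rw [hq0, mul_zero]⟩
    rcases mul_eq_zero.mp h with h | h
    · rcases mul_eq_zero.mp h with h | h
      · exact absurd (eq_zero_of_pow_eq_zero h) hq0
      · obtain ⟨i, -, hi⟩ := Finset.prod_eq_zero_iff.mp h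
        obtain ⟨l, hl, rfl⟩ := exists_sq_of_pderiv_eq_zero hq
          (pderiv_eq_zero_of_milnorQ_eq_zero hq (eq_zero_of_pow_eq_zero hi))
        exact ⟨l, l, hl, hl, rfl⟩
    · exact exists_linear_factors_of_h2_eq_zero hq hq0 h
  · rintro ⟨a, b, ha, hb, rfl⟩
    rw [h2_mul_eq_zero ha hb, mul_zero]
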